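/- Let f be a probability density on ℝ^d. For x ∈ ℝ^d and r > 0 write μ_r(x) := ∫_{B(x,r)} f(y) dy. Then for Lebesgue-almost every x with f(x) > 0: (∫_{B(x,r)} ∫_{B(x,r)} f(y) f(z) 1{‖y−z‖ ≤ r} dy dz) / μ_r(x)² → w_d as r ↓ 0. Equivalently, if Y_1, Y_2 are i.i.d. with the normalized restriction of f to B(x,r) as density, then P{‖Y_1 − Y_2‖ ≤ r} → w_d as r ↓ 0, for almost every such x. -/

import Mathlib

open MeasureTheory Metric Filter

noncomputable section

abbrev Euc (d : ℕ) := EuclideanSpace ℝ (Fin d)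

/-- `w_d`: the probability that two independent random vectors, each uniformly distributed
on the closed unit ball of ℝ^d, are within distance 1 of each other; equivalently, the
2d-dimensional volume of `{(x,y) : x,y ∈ B(0,1), ‖x-y‖ ≤ 1}` divided by `V_d ^ 2`. -/
def ballPairProb (d : ℕ) : ℝ :=
  (volume {p : Euc d × Euc d |
      p.1 ∈ closedBall 0 1 ∧ p.2 ∈ closedBall 0 1 ∧ dist p.1 p.2 ≤ 1}).toReal /
    ((volume (closedBall (0 : Euc d) 1)).toReal) ^ 2

open Pointwise

lemma pairSet_eq (d : ℕ) (x : Euc d) {r : ℝ} (hr : 0 < r) :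
    {p : Euc d × Euc d | p.1 ∈ closedBall x r ∧ p.2 ∈ closedBall x r ∧ dist p.1 p.2 ≤ r}
      = (x, x) +ᵥ r • {p : Euc d × Euc d |
          p.1 ∈ closedBall 0 1 ∧ p.2 ∈ closedBall 0 1 ∧ dist p.1 p.2 ≤ 1} := by
  ext p
  rw [Set.mem_vadd_set_iff_neg_vadd_mem, Set.mem_smul_set_iff_inv_smul_mem₀ hr.ne']
  simp only [Set.mem_setOf_eq, Prod.fst_vadd, Prod.snd_vadd, Prod.smul_fst, Prod.smul_snd,
    mem_closedBall, dist_zero_right, vadd_eq_add, neg_add_eq_sub, Prod.fst_sub, Prod.snd_sub,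
    norm_smul, norm_inv, Real.norm_eq_abs, abs_of_pos hr, dist_smul₀]
  rw [inv_mul_le_one₀ hr, inv_mul_le_one₀ hr, inv_mul_le_one₀ hr,
    ← dist_eq_norm, ← dist_eq_norm, dist_sub_right, dist_comm p.1 x, dist_comm p.2 x]

lemma pairSet_volume (d : ℕ) (x : Euc d) {r : ℝ} (hr : 0 < r) :
    volume {p : Euc d × Euc d | p.1 ∈ closedBall x r ∧ p.2 ∈ closedBall x r ∧ dist p.1 p.2 ≤ r}
      = ENNReal.ofReal (r ^ (d + d)) *
        volume {p : Euc d × Euc d |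
          p.1 ∈ closedBall 0 1 ∧ p.2 ∈ closedBall 0 1 ∧ dist p.1 p.2 ≤ 1} := by
  haveI : (volume : Measure (Euc d × Euc d)).IsAddHaarMeasure := by
    rw [Measure.volume_eq_prod]
    exact Measure.prod.instIsAddHaarMeasure (volume : Measure (Euc d)) (volume : Measure (Euc d))
  rw [pairSet_eq d x hr, measure_vadd, Measure.addHaar_smul]
  congr 2
  rw [abs_of_pos (by positivity)]
  congr 1
  simp

lemma key_bound (d : ℕ) {f : Euc d → ℝ} (hmeas : Measurable f) (hpos : ∀ x, 0 ≤ f x)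
    (hf : Integrable f) (x : Euc d) (r : ℝ) :
    |(∫ y in closedBall x r, ∫ z in closedBall x r,
        f y * f z * (if dist y z ≤ r then (1:ℝ) else 0)) -
      f x ^ 2 * (volume {p : Euc d × Euc d | p.1 ∈ closedBall x r ∧ p.2 ∈ closedBall x r ∧
        dist p.1 p.2 ≤ r}).toReal|
    ≤ (∫ y in closedBall x r, f y) * (∫ y in closedBall x r, |f y - f x|)
      + f x * ((volume (closedBall x r)).toReal * ∫ y in closedBall x r, |f y - f x|) := by
  set B := closedBall x r with hB
  set μB := (volume : Measure (Euc d)).restrict B with hμB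
  haveI : IsFiniteMeasure μB :=
    ⟨by rw [hμB, Measure.restrict_apply_univ]; exact measure_closedBall_lt_top⟩
  have hT : MeasurableSet {p : Euc d × Euc d | dist p.1 p.2 ≤ r} :=
    (isClosed_le (continuous_fst.dist continuous_snd) continuous_const).measurableSet
  set F : Euc d × Euc d → ℝ := fun p => f p.1 * f p.2 * (if dist p.1 p.2 ≤ r then (1:ℝ) else 0)
    with hF_def
  set G : Euc d × Euc d → ℝ := fun p => f x * f x * (if dist p.1 p.2 ≤ r then (1:ℝ) else 0)
    with hG_def
  have hfB : Integrable f μB := hf.restrict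
  have habs : Integrable (fun y => |f y - f x|) μB := (hfB.sub (integrable_const _)).abs
  have hprod : Integrable (fun p : Euc d × Euc d => f p.1 * f p.2) (μB.prod μB) :=
    hfB.mul_prod hfB
  have hFmeas : Measurable F :=
    ((hmeas.comp measurable_fst).mul (hmeas.comp measurable_snd)).mul
      (Measurable.ite hT measurable_const measurable_const)
  have hF : Integrable F (μB.prod μB) := by
    refine hprod.mono hFmeas.aestronglyMeasurable (Filter.Eventually.of_forall fun p => ?_)
    rw [hF_def]
    simp only [Real.norm_eq_abs, abs_mul]
    split <;> simp <;> positivity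
  have hG : Integrable G (μB.prod μB) := by
    have : G = Set.indicator {p : Euc d × Euc d | dist p.1 p.2 ≤ r} (fun _ => f x * f x) := by
      funext p; rw [hG_def]; by_cases h : dist p.1 p.2 ≤ r <;> simp [Set.indicator, h]
    rw [this]
    exact (integrable_const _).indicator hT
  have step1 : (∫ y in B, ∫ z in B, f y * f z * (if dist y z ≤ r then (1:ℝ) else 0))
      = ∫ p, F p ∂(μB.prod μB) := (integral_prod F hF).symm
  have step2 : (∫ p, G p ∂(μB.prod μB)) = f x ^ 2 *
      (volume {p : Euc d × Euc d | p.1 ∈ B ∧ p.2 ∈ B ∧ dist p.1 p.2 ≤ r}).toReal := by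
    have hGind : G = Set.indicator {p : Euc d × Euc d | dist p.1 p.2 ≤ r}
        (fun _ => f x * f x) := by
      funext p; rw [hG_def]; by_cases h : dist p.1 p.2 ≤ r <;> simp [Set.indicator, h]
    rw [hGind, integral_indicator_const _ hT]
    have hμ : (μB.prod μB) {p : Euc d × Euc d | dist p.1 p.2 ≤ r}
        = volume {p : Euc d × Euc d | p.1 ∈ B ∧ p.2 ∈ B ∧ dist p.1 p.2 ≤ r} := by
      rw [hμB, Measure.prod_restrict, Measure.restrict_apply hT, Measure.volume_eq_prod]
      congr 1
      ext p
      simp only [Set.mem_inter_iff, Set.mem_setOf_eq, Set.mem_prod]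
      tauto
    rw [measureReal_def, hμ, smul_eq_mul, sq]
    ring
  rw [step1, ← step2, ← integral_sub hF hG]
  calc |∫ p, (F p - G p) ∂(μB.prod μB)|
      ≤ ∫ p, |F p - G p| ∂(μB.prod μB) := by
        simpa using norm_integral_le_integral_norm (fun p => F p - G p) (μ := μB.prod μB)
    _ ≤ ∫ p, (f p.1 * |f p.2 - f x| + (f x * |f p.1 - f x|) * 1) ∂(μB.prod μB) := by
        refine integral_mono (hF.sub hG).abs
          ((hfB.mul_prod habs).add ((habs.const_mul (f x)).mul_prod (integrable_const 1)))
          fun p => ?_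
        have h1 : F p - G p = (f p.1 * f p.2 - f x * f x) *
            (if dist p.1 p.2 ≤ r then (1:ℝ) else 0) := by rw [hF_def, hG_def]; ring
        have h2 : |F p - G p| ≤ |f p.1 * f p.2 - f x * f x| := by
          rw [h1]; split <;> simp [abs_mul]
        refine h2.trans ?_
        have h3 : f p.1 * f p.2 - f x * f x
            = f p.1 * (f p.2 - f x) + (f p.1 - f x) * f x := by ring
        rw [h3, mul_one]
        refine (abs_add_le _ _).trans ?_
        rw [abs_mul, abs_mul, abs_of_nonneg (hpos _), abs_of_nonneg (hpos _)]
        exact le_of_eq (by ring)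
    _ = (∫ y in B, f y) * (∫ y in B, |f y - f x|)
        + f x * ((volume B).toReal * ∫ y in B, |f y - f x|) := by
        have e1 := integral_prod_mul (μ := μB) (ν := μB) f (fun y => |f y - f x|)
        have e2 := integral_prod_mul (μ := μB) (ν := μB)
          (fun y => f x * |f y - f x|) (fun _ => (1 : ℝ))
        rw [integral_add (hfB.mul_prod habs) ((habs.const_mul (f x)).mul_prod (integrable_const 1)),
          e1, e2]
        simp only [integral_const, smul_eq_mul, mul_one, integral_const_mul, hμB, measureReal_def,
          Measure.restrict_apply_univ]
        ring

/-- For a probability density `f` on ℝ^d and Lebesgue-almost every `x` with `f x > 0`, the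
probability that two independent points, each with density the normalized restriction of `f`
to `B(x,r)`, are within distance `r` of each other converges to `w_d` as `r ↓ 0`. -/
theorem local_pair_prob_tendsto_ballPairProb (d : ℕ) (hd : 1 ≤ d) (f : Euc d → ℝ)
    (hmeas : Measurable f) (hpos : ∀ x, 0 ≤ f x)
    (hint : ∫⁻ x, ENNReal.ofReal (f x) = 1) :
    ∀ᵐ x ∂(volume : Measure (Euc d)), 0 < f x →
      Tendsto (fun r : ℝ =>
          (∫ y in closedBall x r, ∫ z in closedBall x r,
              f y * f z * (if dist y z ≤ r then (1 : ℝ) else 0)) /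
            (∫ y in closedBall x r, f y) ^ 2)
        (nhdsWithin 0 (Set.Ioi 0)) (nhds (ballPairProb d)) := by
  -- f is integrable
  have hf : Integrable f (volume : Measure (Euc d)) := by
    refine ⟨hmeas.aestronglyMeasurable, ?_⟩
    rw [HasFiniteIntegral]
    have h : ∀ a, ‖f a‖ₑ = ENNReal.ofReal (f a) := fun a =>
      Real.enorm_eq_ofReal (hpos a)
    simp_rw [h, hint]
    exact ENNReal.one_lt_top
  filter_upwards [IsUnifLocDoublingMeasure.ae_tendsto_average_norm_sub
    (μ := (volume : Measure (Euc d))) hf.locallyIntegrable 1] with x hx hfx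
  -- the Lebesgue point property at x
  have hleb : Tendsto (fun r : ℝ => ⨍ y in closedBall x r, ‖f y - f x‖)
      (nhdsWithin 0 (Set.Ioi 0)) (nhds 0) :=
    hx (fun _ => x) id tendsto_id (by
      filter_upwards [self_mem_nhdsWithin] with r (hr : (0:ℝ) < r)
      simpa using by positivity)
  clear hx
  -- notation
  set v : ℝ := (volume (closedBall (0 : Euc d) 1)).toReal with hv_def
  have hv : 0 < v :=
    ENNReal.toReal_pos (measure_closedBall_pos volume 0 one_pos).ne' measure_closedBall_lt_top.ne
  set A : ENNReal := volume {p : Euc d × Euc d |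
      p.1 ∈ closedBall 0 1 ∧ p.2 ∈ closedBall 0 1 ∧ dist p.1 p.2 ≤ 1} with hA_def
  have hA_fin : A ≠ ⊤ := by
    refine ne_top_of_le_ne_top ?_ (measure_mono (fun p hp => ?_) :
      A ≤ volume ((closedBall (0 : Euc d) 1) ×ˢ (closedBall (0 : Euc d) 1)))
    · rw [Measure.volume_eq_prod, Measure.prod_prod]
      exact ENNReal.mul_ne_top measure_closedBall_lt_top.ne measure_closedBall_lt_top.ne
    · exact ⟨hp.1, hp.2.1⟩
  set a : ℝ := A.toReal with ha_def
  set c : ℝ → ℝ := fun r => (volume (closedBall x r)).toReal with hc_def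
  have hc : ∀ r : ℝ, 0 ≤ r → c r = r ^ d * v := by
    intro r hr
    show (volume (closedBall x r)).toReal = _
    rw [Measure.addHaar_closedBall' volume x hr, ENNReal.toReal_mul,
      ENNReal.toReal_ofReal (by positivity)]
    simp [hv_def]
  have hcpos : ∀ r : ℝ, 0 < r → 0 < c r := fun r hr => by
    rw [hc r hr.le]; positivity
  set I : ℝ → ℝ := fun r => ∫ y in closedBall x r, f y with hI_def
  set J : ℝ → ℝ := fun r => ∫ y in closedBall x r, |f y - f x| with hJ_def
  set N : ℝ → ℝ := fun r => ∫ y in closedBall x r, ∫ z in closedBall x r,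
      f y * f z * (if dist y z ≤ r then (1 : ℝ) else 0) with hN_def
  have hJnn : ∀ r, 0 ≤ J r := fun r => integral_nonneg fun y => abs_nonneg _
  -- J r / c r → 0
  have hJ : Tendsto (fun r => J r / c r) (nhdsWithin 0 (Set.Ioi 0)) (nhds 0) := by
    refine hleb.congr fun r => ?_
    rw [setAverage_eq (μ := volume) _ (closedBall x r), smul_eq_mul, ← div_eq_inv_mul]
    simp only [Real.norm_eq_abs]
    rfl
  -- I r / c r → f x
  have hI : Tendsto (fun r => I r / c r) (nhdsWithin 0 (Set.Ioi 0)) (nhds (f x)) := by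
    rw [← tendsto_sub_nhds_zero_iff]
    refine squeeze_zero_norm' ?_ hJ
    filter_upwards [self_mem_nhdsWithin] with r (hr : (0:ℝ) < r)
    have hcr := hcpos r hr
    haveI : IsFiniteMeasure ((volume : Measure (Euc d)).restrict (closedBall x r)) :=
      ⟨by rw [Measure.restrict_apply_univ]; exact measure_closedBall_lt_top⟩
    have hIc : I r - f x * c r = ∫ y in closedBall x r, (f y - f x) := by
      rw [integral_sub hf.restrict (integrable_const _), setIntegral_const, smul_eq_mul]
      rw [measureReal_def]
      ring
    have heq : I r / c r - f x = (I r - f x * c r) / c r := by field_simp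
    rw [Real.norm_eq_abs, heq, abs_div, abs_of_pos hcr, hIc]
    refine div_le_div_of_nonneg_right ?_ hcr.le |>.trans_eq rfl
    calc |∫ y in closedBall x r, (f y - f x)| ≤ ∫ y in closedBall x r, |f y - f x| := by
          simpa using norm_integral_le_integral_norm (μ := volume.restrict (closedBall x r))
            (fun y => f y - f x)
      _ = J r := rfl
  -- N r / (c r)^2 → f x ^ 2 * ballPairProb d
  have hN : Tendsto (fun r => N r / (c r) ^ 2) (nhdsWithin 0 (Set.Ioi 0))
      (nhds (f x ^ 2 * ballPairProb d)) := by
    rw [← tendsto_sub_nhds_zero_iff]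
    have hbnd : Tendsto (fun r => (I r / c r) * (J r / c r) + f x * (J r / c r))
        (nhdsWithin 0 (Set.Ioi 0)) (nhds 0) := by
      have := (hI.mul hJ).add (hJ.const_mul (f x))
      simpa using this
    refine squeeze_zero_norm' ?_ hbnd
    filter_upwards [self_mem_nhdsWithin] with r (hr : (0:ℝ) < r)
    have hcr := hcpos r hr
    have hVr : (volume {p : Euc d × Euc d | p.1 ∈ closedBall x r ∧ p.2 ∈ closedBall x r ∧
        dist p.1 p.2 ≤ r}).toReal = r ^ (d + d) * a := by
      rw [pairSet_volume d x hr, ENNReal.toReal_mul, ENNReal.toReal_ofReal (by positivity),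
        ha_def, hA_def]
    have hkey := key_bound d hmeas hpos hf x r
    rw [hVr] at hkey
    -- divide by (c r)^2
    have hbppr : f x ^ 2 * (r ^ (d + d) * a) / (c r) ^ 2 = f x ^ 2 * ballPairProb d := by
      rw [hc r hr.le, ballPairProb]
      rw [← hA_def, ← ha_def, ← hv_def]
      field_simp
      ring
    have hnorm : ‖N r / c r ^ 2 - f x ^ 2 * ballPairProb d‖
        = |N r - f x ^ 2 * (r ^ (d + d) * a)| / (c r) ^ 2 := by
      rw [← hbppr, Real.norm_eq_abs, div_sub_div_same, abs_div,
        abs_of_pos (by positivity : (0:ℝ) < (c r)^2)]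
    rw [hnorm]
    rw [div_le_iff₀ (by positivity : (0:ℝ) < (c r)^2)]
    refine hkey.trans (le_of_eq ?_)
    field_simp
    ring
  -- conclude
  have hI2 : Tendsto (fun r => (I r / c r) ^ 2) (nhdsWithin 0 (Set.Ioi 0))
      (nhds (f x ^ 2)) := hI.pow 2
  have hfx2 : f x ^ 2 ≠ 0 := pow_ne_zero 2 hfx.ne'
  have hdiv := hN.div hI2 hfx2
  have hval : f x ^ 2 * ballPairProb d / f x ^ 2 = ballPairProb d := by
    field_simp
  rw [hval] at hdiv
  refine hdiv.congr' ?_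
  filter_upwards [self_mem_nhdsWithin] with r (hr : (0:ℝ) < r)
  have hcr := (hcpos r hr).ne'
  show N r / c r ^ 2 / (I r / c r) ^ 2 = N r / I r ^ 2
  rw [div_pow, div_div_div_cancel_right₀ (pow_ne_zero 2 hcr)]

end
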